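/- Let p, d, l, a, φ, δ be real numbers with φ < 1 and l > 0. Then the insurer's expected payoff from auditing a breached discount claim exceeds her expected payoff from not auditing, i.e. φ·(p − d − l − a) + (1 − φ)·(δ·(p − d − a) + (1 − δ)·(p − l − a)) > φ·(p − d − l) + (1 − φ)·(δ·(p − d − l) + (1 − δ)·(p − l)), if and only if δ > a / ((1 − φ)·l). (Auditing is strictly preferred exactly when the non-investing policyholder claims the discount with probability above the equilibrium threshold.) -/

import Mathlib

/-- Auditing costs `a` on every claim but saves the indemnity `l` exactly on the discount claims
of non-investing policyholders, which occur with probability `(1 - φ) δ`. -/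
lemma audit_payoff_sub_no_audit_payoff {R : Type*} [CommRing R] (p d l a φ δ : R) :
    φ * (p - d - l - a) + (1 - φ) * (δ * (p - d - a) + (1 - δ) * (p - l - a))
      - (φ * (p - d - l) + (1 - φ) * (δ * (p - d - l) + (1 - δ) * (p - l)))
      = (1 - φ) * l * δ - a := by
  ring

/-- Upon a breach, the insurer strictly prefers auditing a discount
claim iff the non-investing policyholder claims with probability
`δ > a / ((1 − φ)·l)`. -/
theorem audit_preferred_iff_claiming_above_threshold
    (p d l a φ δ : ℝ) (hφ : φ < 1) (hl : l > 0) :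
    (φ * (p - d - l - a)
      + (1 - φ) * (δ * (p - d - a) + (1 - δ) * (p - l - a))
     > φ * (p - d - l)
      + (1 - φ) * (δ * (p - d - l) + (1 - δ) * (p - l)))
    ↔ δ > a / ((1 - φ) * l) := by
  have hpos : 0 < (1 - φ) * l := mul_pos (sub_pos.mpr hφ) hl
  rw [gt_iff_lt, gt_iff_lt, ← sub_pos, audit_payoff_sub_no_audit_payoff, sub_pos,
    div_lt_iff₀' hpos]
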